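/- arXiv:2509.24932 — 3 statements merged into one kernel-verified Lean document; each statement's English description precedes it below -/
import Mathlib

section
/- Let M be a positive integer, let 𝒞 be a finite set (of clusters), and for each c ∈ 𝒞 let 𝒩_c be a finite nonempty set (of satellites). Let b : 𝒞 → ℝ be nonnegative with Σ_{c∈𝒞} b_c = 1 and, for each c, let a : 𝒩_c → ℝ be nonnegative with Σ_{n∈𝒩_c} a_n = 1. Let v_n ∈ ℝ^M for each n, and set u_c = Σ_{n∈𝒩_c} a_n v_n. Suppose ζ̂ > 0 is such that every cluster satisfies the intra-cluster dissimilarity bound Σ_{n∈𝒩_c} a_n ‖v_n‖² ≤ ζ̂ ‖u_c‖², and suppose ζ₂ ≥ 0 satisfies the inter-cluster dissimilarity bound Σ_{c∈𝒞} b_c ‖u_c‖² ≤ ‖Σ_{c∈𝒞} b_c u_c‖² + ζ₂. Then ( Σ_{c∈𝒞} b_c Σ_{n∈𝒩_c} a_n ‖v_n‖² − ζ̂ ‖Σ_{c∈𝒞} b_c Σ_{n∈𝒩_c} a_n v_n‖² ) / ζ̂ ≤ ζ₂. -/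
open scoped BigOperators

/-- **Bounding the dissimilarity of loss functions across virtual constellations.**
Given clusters `𝒞` with per-cluster members `𝒩 c`, nonnegative cluster weights `b` summing
to one, nonnegative intra-cluster weights `a c` summing to one, vectors `v c n ∈ ℝ^M`
(the local gradients) with cluster averages `u_c = Σ_n a_n v_n`, if every cluster
satisfies the intra-cluster dissimilarity bound
`Σ_n a_n ‖v_n‖² ≤ ζ̂ ‖u_c‖²` and the inter-cluster dissimilarity bound
`Σ_c b_c ‖u_c‖² ≤ ‖Σ_c b_c u_c‖² + ζ₂` holds, then
`(Σ_c b_c Σ_n a_n ‖v_n‖² − ζ̂ ‖Σ_c b_c Σ_n a_n v_n‖²)/ζ̂ ≤ ζ₂`. -/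
theorem fedspan_cluster_dissimilarity_bound
    {M : ℕ} (hM : 0 < M) {C : Type*} [Fintype C]
    {N : C → Type*} [∀ c, Fintype (N c)] [∀ c, Nonempty (N c)]
    (b : C → ℝ) (a : (c : C) → N c → ℝ)
    (v : (c : C) → N c → EuclideanSpace ℝ (Fin M))
    (hb : ∀ c, 0 ≤ b c) (hbsum : ∑ c, b c = 1)
    (ha : ∀ c n, 0 ≤ a c n) (hasum : ∀ c, ∑ n, a c n = 1)
    (ζhat ζ₂ : ℝ) (hζhat : 0 < ζhat) (hζ₂ : 0 ≤ ζ₂)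
    (hintra : ∀ c, ∑ n, a c n * ‖v c n‖ ^ 2 ≤ ζhat * ‖∑ n, a c n • v c n‖ ^ 2)
    (hinter : ∑ c, b c * ‖∑ n, a c n • v c n‖ ^ 2 ≤
      ‖∑ c, b c • ∑ n, a c n • v c n‖ ^ 2 + ζ₂) :
    (∑ c, b c * ∑ n, a c n * ‖v c n‖ ^ 2 -
        ζhat * ‖∑ c, b c • ∑ n, a c n • v c n‖ ^ 2) / ζhat ≤ ζ₂ := by
  rw [div_le_iff₀ hζhat, sub_le_iff_le_add]
  have h1 : ∑ c, b c * ∑ n, a c n * ‖v c n‖ ^ 2 ≤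
      ζhat * ∑ c, b c * ‖∑ n, a c n • v c n‖ ^ 2 := by
    rw [Finset.mul_sum]
    apply Finset.sum_le_sum
    intro c _
    rw [mul_left_comm]
    exact mul_le_mul_of_nonneg_left (hintra c) (hb c)
  calc ∑ c, b c * ∑ n, a c n * ‖v c n‖ ^ 2
      ≤ ζhat * ∑ c, b c * ‖∑ n, a c n • v c n‖ ^ 2 := h1
    _ ≤ ζhat * (‖∑ c, b c • ∑ n, a c n • v c n‖ ^ 2 + ζ₂) :=
        mul_le_mul_of_nonneg_left hinter hζhat.le
    _ = ζ₂ * ζhat + ζhat * ‖∑ c, b c • ∑ n, a c n • v c n‖ ^ 2 := by ring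
end

section
/- Let V be a finite type, r ∈ V, and p : V → V a map with p(r) = r and such that for every v ∈ V there exists k ∈ ℕ with the k-fold iterate p^[k](v) = r (so p is the successor map of an in-tree rooted at r: iterating p from any node reaches the root). Let G be an additive commutative monoid (e.g., ℝ^M) and w : V → G. Then there exists a unique function agg : V → G satisfying the aggregation recursion agg(v) = w(v) + Σ_{u ∈ V, u ≠ r, p(u) = v} agg(u) for every v ∈ V, and this function satisfies agg(r) = Σ_{v ∈ V} w(v). -/
open scoped BigOperators

/-- **Spanning-tree aggregation identity.**
Let `V` be a finite type with a root `r` and a successor map `p` with `p r = r` such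
that from every node iterating `p` eventually reaches `r` (an in-tree rooted at `r`).
For values `w : V → G` in an additive commutative monoid, there is a unique function
`agg` satisfying the aggregation recursion
`agg v = w v + Σ_{u ≠ r, p u = v} agg u`, and any such function satisfies
`agg r = Σ_v w v` (the root aggregates the sum of all values). -/
theorem tree_aggregation_unique_and_total
    {V : Type*} [Fintype V] [DecidableEq V] (r : V) (p : V → V)
    (hpr : p r = r) (hreach : ∀ v : V, ∃ k : ℕ, p^[k] v = r)
    {G : Type*} [AddCommMonoid G] (w : V → G) :
    (∃! agg : V → G, ∀ v : V, agg v =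
        w v + ∑ u ∈ Finset.univ.filter (fun u => u ≠ r ∧ p u = v), agg u) ∧
      ∀ agg : V → G, (∀ v : V, agg v =
          w v + ∑ u ∈ Finset.univ.filter (fun u => u ≠ r ∧ p u = v), agg u) →
        agg r = ∑ v, w v := by
  classical
  obtain ⟨d, hd, hdmin⟩ : ∃ d : V → ℕ, (∀ v, p^[d v] v = r) ∧
      ∀ v k, p^[k] v = r → d v ≤ k :=
    ⟨fun v => Nat.find (hreach v), fun v => Nat.find_spec (hreach v),
      fun v k h => Nat.find_min' (hreach v) h⟩
  -- no cycle avoiding the root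
  have nocyc : ∀ v t, 0 < t → p^[t] v = v → (∀ i, i < t → p^[i] v ≠ r) → False := by
    intro v t ht hcyc hne
    obtain ⟨m, hm⟩ := hreach v
    have hmod : ∀ j, p^[j] v = p^[j % t] v := by
      intro j
      induction j using Nat.strong_induction_on with
      | _ j ih =>
        by_cases h : j < t
        · rw [Nat.mod_eq_of_lt h]
        · push_neg at h
          have h2 : p^[j] v = p^[j - t] v := by
            conv_lhs => rw [show j = (j - t) + t by omega]
            rw [Function.iterate_add_apply, hcyc]
          rw [h2, ih (j - t) (by omega), ← Nat.mod_eq_sub_mod h]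
    exact hne (m % t) (Nat.mod_lt _ ht) ((hmod m).symm.trans hm)
  set C : V → Finset V := fun v => Finset.univ.filter (fun u => u ≠ r ∧ p u = v) with hC
  have memC : ∀ v c, c ∈ C v ↔ c ≠ r ∧ p c = v := by intro v c; simp [hC]
  set Sub : V → Finset V :=
    fun v => Finset.univ.filter (fun u => ∃ k, p^[k] u = v ∧ ∀ i, i < k → p^[i] u ≠ r) with hSub
  have memSub : ∀ v u, u ∈ Sub v ↔ ∃ k, p^[k] u = v ∧ ∀ i, i < k → p^[i] u ≠ r := by
    intro v u; simp [hSub]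
  have hvmem : ∀ v, v ∈ Sub v := fun v => (memSub v v).2 ⟨0, rfl, by omega⟩
  have hstep : ∀ v u, u ∈ Sub v → u ≠ v → ∃ c, c ∈ C v ∧ u ∈ Sub c := by
    intro v u hu hne
    obtain ⟨k, hk, hni⟩ := (memSub v u).1 hu
    have hk0 : k ≠ 0 := by rintro rfl; exact hne hk
    refine ⟨p^[k - 1] u, (memC _ _).2 ⟨hni _ (by omega), ?_⟩, (memSub _ _).2
      ⟨k - 1, rfl, fun i hi => hni i (by omega)⟩⟩
    have hk' : p^[(k - 1) + 1] u = v := by rw [show k - 1 + 1 = k by omega]; exact hk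
    rw [Function.iterate_succ_apply'] at hk'
    exact hk'
  have hstep' : ∀ v c u, c ∈ C v → u ∈ Sub c → u ∈ Sub v ∧ u ≠ v := by
    intro v c u hc hu
    obtain ⟨hcr, hpc⟩ := (memC v c).1 hc
    obtain ⟨k, hk, hni⟩ := (memSub c u).1 hu
    have hni' : ∀ i, i < k + 1 → p^[i] u ≠ r := by
      intro i hi
      rcases Nat.lt_or_ge i k with h | h
      · exact hni i h
      · have : i = k := by omega
        rw [this, hk]; exact hcr
    have hmem : u ∈ Sub v := (memSub v u).2
      ⟨k + 1, by rw [Function.iterate_succ_apply', hk, hpc], hni'⟩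
    refine ⟨hmem, ?_⟩
    rintro rfl
    exact nocyc u (k + 1) (by omega)
      (by rw [Function.iterate_succ_apply', hk, hpc]) hni'
  have hdisj : ∀ v, (↑(C v) : Set V).PairwiseDisjoint Sub := by
    intro v c1 hc1 c2 hc2 hne
    show Disjoint (Sub c1) (Sub c2)
    rw [Finset.disjoint_left]
    intro u hu1 hu2
    obtain ⟨hc1r, hpc1⟩ := (memC v c1).1 (by simpa using hc1)
    obtain ⟨hc2r, hpc2⟩ := (memC v c2).1 (by simpa using hc2)
    obtain ⟨k1, hk1, hni1⟩ := (memSub c1 u).1 hu1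
    obtain ⟨k2, hk2, hni2⟩ := (memSub c2 u).1 hu2
    have aux : ∀ (a b : V) (ka kb : ℕ), a ≠ r → p a = v → b ≠ r → p b = v →
        p^[ka] u = a → p^[kb] u = b → (∀ i, i < kb → p^[i] u ≠ r) → ka < kb → False := by
      intro a b ka kb har hpa hbr hpb hka hkb hnib hlt
      set t := kb - ka with htdef
      have hta : p^[t] a = b := by
        rw [← hka, ← Function.iterate_add_apply, show t + ka = kb by omega, hkb]
      have hcycv : p^[t] v = v := by
        have : p^[t + 1] a = p b := by rw [Function.iterate_succ_apply', hta]
        rw [Function.iterate_succ_apply, hpa, hpb] at this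
        exact this
      refine nocyc v t (by omega) hcycv ?_
      intro i hi
      have : p^[i] v = p^[ka + i + 1] u := by
        rw [← hpa, ← hka, ← Function.iterate_succ_apply' p ka u, ← Function.iterate_add_apply]
        congr 1
        omega
      rw [this]
      rcases Nat.lt_or_ge (ka + i + 1) kb with h | h
      · exact hnib _ h
      · have : ka + i + 1 = kb := by omega
        rw [this, hkb]; exact hbr
    rcases Nat.lt_trichotomy k1 k2 with h | h | h
    · exact aux c1 c2 k1 k2 hc1r hpc1 hc2r hpc2 hk1 hk2 hni2 h
    · exact hne (by rw [← hk1, h, hk2])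
    · exact aux c2 c1 k2 k1 hc2r hpc2 hc1r hpc1 hk2 hk1 hni1 h
  have hpartset : ∀ v, Sub v = insert v ((C v).biUnion Sub) := by
    intro v; ext u
    simp only [Finset.mem_insert, Finset.mem_biUnion]
    constructor
    · intro hu
      by_cases h : u = v
      · exact Or.inl h
      · exact Or.inr (hstep v u hu h)
    · rintro (rfl | ⟨c, hc, hcu⟩)
      · exact hvmem u
      · exact (hstep' v c u hc hcu).1
  have hvnot : ∀ v, v ∉ (C v).biUnion Sub := by
    intro v h
    obtain ⟨c, hc, hcv⟩ := Finset.mem_biUnion.1 h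
    exact (hstep' v c v hc hcv).2 rfl
  set S : V → G := fun v => ∑ u ∈ Sub v, w u with hSdef
  have hSrec : ∀ v, S v = w v + ∑ c ∈ C v, S c := by
    intro v
    calc S v = ∑ u ∈ insert v ((C v).biUnion Sub), w u := by
          show ∑ u ∈ Sub v, w u = _
          rw [hpartset v]
    _ = w v + ∑ u ∈ (C v).biUnion Sub, w u := Finset.sum_insert (hvnot v)
    _ = w v + ∑ c ∈ C v, ∑ u ∈ Sub c, w u := by rw [Finset.sum_biUnion (hdisj v)]
    _ = w v + ∑ c ∈ C v, S c := rfl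
  have hdchild : ∀ v c, c ≠ r → p c = v → d v < d c := by
    intro v c hcr hpc
    have h1 : d c ≠ 0 := by
      intro h
      apply hcr
      have := hd c
      rwa [h, Function.iterate_zero_apply] at this
    have h2 : p^[d c - 1] v = r := by
      have := hd c
      rwa [show d c = (d c - 1) + 1 by omega, Function.iterate_succ_apply, hpc] at this
    have := hdmin v _ h2
    omega
  set N : ℕ := Finset.univ.sup d with hN
  have hdN : ∀ v, d v ≤ N := fun v => Finset.le_sup (Finset.mem_univ v)
  have key : ∀ agg : V → G, (∀ v : V, agg v =
      w v + ∑ u ∈ Finset.univ.filter (fun u => u ≠ r ∧ p u = v), agg u) →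
      ∀ v, agg v = S v := by
    intro agg hagg
    have main : ∀ n v, N + 1 ≤ d v + n → agg v = S v := by
      intro n
      induction n with
      | zero => intro v hv; exact absurd hv (by have := hdN v; omega)
      | succ n ih =>
        intro v hv
        rw [hagg v, hSrec v]
        congr 1
        apply Finset.sum_congr rfl
        intro c hc
        obtain ⟨hcr, hpc⟩ := (memC v c).1 hc
        exact ih c (by have := hdchild v c hcr hpc; omega)
    intro v
    exact main (N + 1) v (by omega)
  have hSroot : S r = ∑ v, w v := by
    have hSr : Sub r = Finset.univ := by
      ext u
      simp only [Finset.mem_univ, iff_true]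
      refine (memSub r u).2 ⟨d u, hd u, fun i hi hir => ?_⟩
      exact absurd (hdmin u i hir) (by omega)
    show ∑ u ∈ Sub r, w u = _
    rw [hSr]
  refine ⟨⟨S, hSrec, fun g hg => funext fun v => key g hg v⟩, fun agg hagg => ?_⟩
  rw [key agg hagg r, hSroot]
end

section
/- Let N ≥ 1, let A be an N×N matrix with entries in {0,1} (regarded as natural numbers), interpreted as the adjacency matrix of a directed graph on vertex set {0,…,N−1} (there is an edge i→j iff A_{i,j} = 1), and let r be a vertex. Call a sequence i = v_0, v_1, …, v_q = j with A_{v_t, v_{t+1}} = 1 for all 0 ≤ t < q a directed walk of length q from i to j. Then the following are equivalent: (1) Σ_{i,j} A_{i,j} = N − 1 and, for every vertex n ≠ r, Σ_{q=1}^{N−1} (A^q)_{r,n} = 1; (2) A is the adjacency matrix of a spanning out-arborescence rooted at r, i.e., r has in-degree 0, every vertex n ≠ r has in-degree exactly 1, every vertex is reachable from r by a directed walk, the digraph contains no directed cycles, and for every n ≠ r there is exactly one directed walk (of any positive length) from r to n. -/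
open scoped BigOperators

/-- `IsDirWalk A q v` says that the sequence `v 0, v 1, …, v q` is a directed walk of
length `q` in the directed graph with adjacency matrix `A` (an edge `i → j` exists
iff `A i j = 1`). -/
def IsDirWalk {N : ℕ} (A : Matrix (Fin N) (Fin N) ℕ) (q : ℕ)
    (v : Fin (q + 1) → Fin N) : Prop :=
  ∀ t : Fin q, A (v t.castSucc) (v t.succ) = 1

namespace SpanArbAux

variable {N : ℕ}

attribute [local instance] Classical.propDecidable

/-- ℕ-indexed walks. -/
def NWalk (A : Matrix (Fin N) (Fin N) ℕ) (q : ℕ) (f : ℕ → Fin N) : Prop :=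
  ∀ t, t < q → A (f t) (f (t + 1)) = 1

/-- The finite set of walks of length `q` from `i` to `j`. -/
noncomputable def walkSet (A : Matrix (Fin N) (Fin N) ℕ) (q : ℕ) (i j : Fin N) :
    Finset (Fin (q + 1) → Fin N) :=
  Finset.univ.filter fun v =>
    v 0 = i ∧ v (Fin.last q) = j ∧ IsDirWalk A q v

lemma mem_walkSet {A : Matrix (Fin N) (Fin N) ℕ} {q : ℕ} {i j : Fin N}
    {v : Fin (q + 1) → Fin N} :
    v ∈ walkSet A q i j ↔ v 0 = i ∧ v (Fin.last q) = j ∧ IsDirWalk A q v := by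
  simp [walkSet]

lemma isDirWalk_succ_iff {A : Matrix (Fin N) (Fin N) ℕ} {q : ℕ}
    {v : Fin (q + 2) → Fin N} :
    IsDirWalk A (q + 1) v ↔
      IsDirWalk A q (Fin.init v) ∧
        A (v (Fin.last q).castSucc) (v (Fin.last (q + 1))) = 1 := by
  constructor
  · intro h
    refine ⟨fun t => ?_, ?_⟩
    · have := h t.castSucc
      rwa [Fin.succ_castSucc] at this
    · have := h (Fin.last q)
      rwa [Fin.succ_last] at this
  · rintro ⟨h1, h2⟩ t
    refine Fin.lastCases ?_ (fun s => ?_) t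
    · rwa [Fin.succ_last]
    · have := h1 s
      rwa [Fin.succ_castSucc]

lemma walkSet_card_succ (A : Matrix (Fin N) (Fin N) ℕ)
    (hA : ∀ i j, A i j = 0 ∨ A i j = 1) (q : ℕ) (i j : Fin N) :
    (walkSet A (q + 1) i j).card = ∑ k, (walkSet A q i k).card * A k j := by
  rw [Finset.card_eq_sum_card_fiberwise
    (f := fun v : Fin (q + 2) → Fin N => v (Fin.last q).castSucc)
    (t := Finset.univ) (fun x _ => Finset.mem_univ _)]
  refine Finset.sum_congr rfl fun k _ => ?_
  rcases hA k j with h0 | h1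
  · rw [h0, Nat.mul_zero, Finset.card_eq_zero, Finset.eq_empty_iff_forall_notMem]
    intro v hv
    rw [Finset.mem_filter, mem_walkSet] at hv
    obtain ⟨⟨hv0, hvl, hw⟩, hk⟩ := hv
    have := (isDirWalk_succ_iff.1 hw).2
    rw [hk, hvl, h0] at this
    exact absurd this one_ne_zero.symm
  · rw [h1, Nat.mul_one]
    refine Finset.card_bij' (fun v _ => Fin.init v) (fun w _ => Fin.snoc w j)
      ?_ ?_ ?_ ?_
    · intro v hv
      rw [Finset.mem_filter, mem_walkSet] at hv
      obtain ⟨⟨hv0, hvl, hw⟩, hk⟩ := hv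
      rw [mem_walkSet]
      refine ⟨?_, ?_, (isDirWalk_succ_iff.1 hw).1⟩
      · show v (Fin.castSucc 0) = i
        rwa [Fin.castSucc_zero]
      · exact hk
    · intro w hw
      rw [mem_walkSet] at hw
      obtain ⟨hw0, hwl, hwalk⟩ := hw
      rw [Finset.mem_filter, mem_walkSet]
      have hsl : (Fin.snoc w j : Fin (q + 2) → Fin N) (Fin.last q).castSucc = k := by
        rw [Fin.snoc_castSucc, hwl]
      refine ⟨⟨?_, ?_, ?_⟩, hsl⟩
      · show (Fin.snoc w j : Fin (q + 2) → Fin N) 0 = i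
        have h00 : ((0 : Fin (q + 1)).castSucc : Fin (q + 2)) = 0 := Fin.castSucc_zero
        rw [← h00, Fin.snoc_castSucc, hw0]
      · exact Fin.snoc_last _ _
      · show IsDirWalk A (q + 1) (Fin.snoc w j)
        rw [isDirWalk_succ_iff, Fin.init_snoc]
        exact ⟨hwalk, by rw [hsl, Fin.snoc_last, h1]⟩
    · intro v hv
      rw [Finset.mem_filter, mem_walkSet] at hv
      obtain ⟨⟨hv0, hvl, hw⟩, hk⟩ := hv
      show Fin.snoc (Fin.init v) j = v
      have hs := Fin.snoc_init_self v
      rwa [hvl] at hs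
    · intro w _
      exact Fin.init_snoc (α := fun _ => Fin N) j w

lemma pow_eq_walkSet_card (A : Matrix (Fin N) (Fin N) ℕ)
    (hA : ∀ i j, A i j = 0 ∨ A i j = 1) :
    ∀ q i j, (A ^ q) i j = (walkSet A q i j).card := by
  intro q
  induction q with
  | zero =>
    intro i j
    rw [pow_zero, Matrix.one_apply]
    by_cases h : i = j
    · subst h
      rw [if_pos rfl]
      symm
      rw [Finset.card_eq_one]
      refine ⟨fun _ => i, ?_⟩
      ext v
      rw [mem_walkSet, Finset.mem_singleton]
      constructor
      · rintro ⟨h0, _, _⟩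
        funext t
        have ht : t = 0 := Fin.ext (Nat.lt_one_iff.mp t.isLt)
        rw [ht, h0]
      · rintro rfl
        exact ⟨rfl, rfl, fun t => t.elim0⟩
    · rw [if_neg h]
      symm
      rw [Finset.card_eq_zero, Finset.eq_empty_iff_forall_notMem]
      intro v hv
      rw [mem_walkSet] at hv
      obtain ⟨h0, hl, _⟩ := hv
      exact h (h0.symm.trans hl)
  | succ q ih =>
    intro i j
    rw [pow_succ, Matrix.mul_apply, walkSet_card_succ A hA]
    exact Finset.sum_congr rfl fun k _ => by rw [ih]

/-- ℕ-walk from a Fin-walk. -/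
noncomputable def toN {q : ℕ} (v : Fin (q + 1) → Fin N) : ℕ → Fin N :=
  fun t => v ⟨min t q, Nat.lt_succ_of_le (Nat.min_le_right t q)⟩

lemma toN_eq {q : ℕ} (v : Fin (q + 1) → Fin N) {t : ℕ} (ht : t ≤ q) :
    toN v t = v ⟨t, Nat.lt_succ_of_le ht⟩ := by
  unfold toN
  congr 1
  exact Fin.ext (Nat.min_eq_left ht)

lemma toN_zero {q : ℕ} (v : Fin (q + 1) → Fin N) : toN v 0 = v 0 := by
  rw [toN_eq v (Nat.zero_le q)]
  rfl

lemma toN_last {q : ℕ} (v : Fin (q + 1) → Fin N) : toN v q = v (Fin.last q) := by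
  rw [toN_eq v (le_refl q)]
  rfl

lemma toN_nwalk {A : Matrix (Fin N) (Fin N) ℕ} {q : ℕ} {v : Fin (q + 1) → Fin N}
    (h : IsDirWalk A q v) : NWalk A q (toN v) := by
  intro t ht
  rw [toN_eq v (le_of_lt ht), toN_eq v ht]
  have := h ⟨t, ht⟩
  have e1 : (⟨t, ht⟩ : Fin q).castSucc = ⟨t, Nat.lt_succ_of_le (le_of_lt ht)⟩ := rfl
  have e2 : (⟨t, ht⟩ : Fin q).succ = ⟨t + 1, Nat.lt_succ_of_le ht⟩ := rfl
  rwa [e1, e2] at this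

/-- Fin-walk from an ℕ-walk. -/
def ofN {q : ℕ} (f : ℕ → Fin N) : Fin (q + 1) → Fin N := fun t => f t.val

lemma ofN_dirWalk {A : Matrix (Fin N) (Fin N) ℕ} {q : ℕ} {f : ℕ → Fin N}
    (h : NWalk A q f) : IsDirWalk A q (ofN (q := q) f) := by
  intro t
  have := h t.val t.isLt
  have e1 : (ofN (q := q) f) t.castSucc = f t.val := rfl
  have e2 : (ofN (q := q) f) t.succ = f (t.val + 1) := rfl
  rwa [e1, e2]

section Pred

variable (A : Matrix (Fin N) (Fin N) ℕ) (r : Fin N)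

/-- The unique in-neighbor of a non-root vertex. -/
noncomputable def pred (n : Fin N) : Fin N :=
  if h : ∃ i, A i n = 1 then h.choose else r

variable {A r}

lemma pred_eq (hu : ∀ n : Fin N, n ≠ r → ∃! i, A i n = 1)
    {x y : Fin N} (hy : y ≠ r) (hxy : A x y = 1) : pred A r y = x := by
  have hex : ∃ i, A i y = 1 := ⟨x, hxy⟩
  rw [pred, dif_pos hex]
  obtain ⟨i, hi, huniq⟩ := hu y hy
  rw [huniq _ hex.choose_spec, huniq _ hxy]

/-- positions ≥ 1 on a walk are not `r` when `r` has in-degree 0 -/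
lemma pos_ne_r (hr : ∀ i, A i r = 0) {q : ℕ} {f : ℕ → Fin N}
    (hw : NWalk A q f) {t : ℕ} (h1 : 1 ≤ t) (h2 : t ≤ q) : f t ≠ r := by
  intro hfr
  obtain ⟨s, rfl⟩ := Nat.exists_eq_add_of_le h1
  have := hw s (by omega)
  rw [show s + 1 = 1 + s by omega, hfr, hr (f s)] at this
  exact one_ne_zero this.symm

lemma nwalk_pred (hr : ∀ i, A i r = 0) (hu : ∀ n : Fin N, n ≠ r → ∃! i, A i n = 1)
    {q : ℕ} {f : ℕ → Fin N} (hw : NWalk A q f) :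
    ∀ m, m ≤ q → (pred A r)^[m] (f q) = f (q - m) := by
  intro m
  induction m with
  | zero => intro _; simp
  | succ m ih =>
    intro hm
    have hmq : m ≤ q := by omega
    rw [Function.iterate_succ_apply', ih hmq]
    have h1 : 1 ≤ q - m := by omega
    have hedge : A (f (q - m - 1)) (f (q - m)) = 1 := by
      have := hw (q - m - 1) (by omega)
      rwa [show q - m - 1 + 1 = q - m by omega] at this
    rw [pred_eq hu (pos_ne_r hr hw h1 (by omega)) hedge,
      show q - m - 1 = q - (m + 1) by omega]

end Pred

section Main

variable {A : Matrix (Fin N) (Fin N) ℕ} {r : Fin N}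

lemma walk_char (hr : ∀ i, A i r = 0) (hu : ∀ n : Fin N, n ≠ r → ∃! i, A i n = 1)
    {q : ℕ} {f : ℕ → Fin N} (hw : NWalk A q f) (h0 : f 0 = r) (hq : 1 ≤ q) :
    (pred A r)^[q] (f q) = r ∧ (∀ m, m < q → (pred A r)^[m] (f q) ≠ r) ∧
      (∀ t, t ≤ q → f t = (pred A r)^[q - t] (f q)) := by
  refine ⟨?_, ?_, ?_⟩
  · rw [nwalk_pred hr hu hw q (le_refl q), Nat.sub_self, h0]
  · intro m hm
    rw [nwalk_pred hr hu hw m (le_of_lt hm)]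
    exact pos_ne_r hr hw (by omega) (by omega)
  · intro t ht
    rw [nwalk_pred hr hu hw (q - t) (Nat.sub_le q t), Nat.sub_sub_self ht]

lemma walk_len_unique (hr : ∀ i, A i r = 0)
    (hu : ∀ n : Fin N, n ≠ r → ∃! i, A i n = 1)
    {q1 q2 : ℕ} {f1 f2 : ℕ → Fin N} (hw1 : NWalk A q1 f1) (hw2 : NWalk A q2 f2)
    (h01 : f1 0 = r) (h02 : f2 0 = r) (hq1 : 1 ≤ q1) (hq2 : 1 ≤ q2)
    (hend : f1 q1 = f2 q2) :
    q1 = q2 ∧ ∀ t, t ≤ q1 → f1 t = f2 t := by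
  obtain ⟨ha1, hb1, hc1⟩ := walk_char hr hu hw1 h01 hq1
  obtain ⟨ha2, hb2, hc2⟩ := walk_char hr hu hw2 h02 hq2
  have hq : q1 = q2 := by
    rcases Nat.lt_trichotomy q1 q2 with h | h | h
    · exact absurd (hend ▸ ha1) (hb2 q1 h)
    · exact h
    · exact absurd (hend ▸ ha2 : (pred A r)^[q2] (f1 q1) = r) (hb1 q2 h)
  subst hq
  refine ⟨rfl, fun t ht => ?_⟩
  rw [hc1 t ht, hc2 t ht, hend]

/-- Periodic extension of a cycle. -/
lemma cycle_ext {c : ℕ} {g : ℕ → Fin N} (hc : 1 ≤ c) (hg : NWalk A c g)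
    (h0c : g 0 = g c) (t : ℕ) :
    A (g (t % c)) (g ((t + 1) % c)) = 1 := by
  have hlt : t % c < c := Nat.mod_lt t hc
  have hkey : (t + 1) % c = (t % c + 1 % c) % c := Nat.add_mod t 1 c
  rcases Nat.lt_or_ge (t % c + 1) c with h | h
  · have hc2 : 1 < c := by omega
    have he : (t + 1) % c = t % c + 1 := by
      rw [hkey, Nat.mod_eq_of_lt hc2, Nat.mod_eq_of_lt h]
    rw [he]
    exact hg _ hlt
  · have he : t % c = c - 1 := by omega
    have h2 : (t + 1) % c = 0 := by
      rcases Nat.eq_or_lt_of_le hc with h1 | hc2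
      · rw [← h1]; exact Nat.mod_one _
      · rw [hkey, Nat.mod_eq_of_lt hc2, show t % c + 1 = c by omega, Nat.mod_self]
    rw [h2, h0c, he]
    have := hg (c - 1) (by omega)
    rwa [show c - 1 + 1 = c by omega] at this

lemma no_cycle (hr : ∀ i, A i r = 0) (hu : ∀ n : Fin N, n ≠ r → ∃! i, A i n = 1)
    (hreach : ∀ n : Fin N, n ≠ r →
      ∃ q f, NWalk A q f ∧ 1 ≤ q ∧ f 0 = r ∧ f q = n)
    {c : ℕ} {g : ℕ → Fin N} (hc : 1 ≤ c) (hg : NWalk A c g) (h0c : g 0 = g c) :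
    False := by
  set G : ℕ → Fin N := fun t => g (t % c) with hG
  have hGedge : ∀ t, A (G t) (G (t + 1)) = 1 := fun t => cycle_ext hc hg h0c t
  have hGne : ∀ t, G t ≠ r := by
    intro t
    rcases Nat.eq_zero_or_pos (t % c) with h | h
    · have : G t = g c := by rw [hG]; simp only [h]; exact h0c
      rw [this]
      exact pos_ne_r hr hg hc (le_refl c)
    · exact pos_ne_r hr hg h (le_of_lt (Nat.mod_lt t hc))
  have hGpred : ∀ m s, (pred A r)^[m] (G (s + m)) = G s := by
    intro m
    induction m with
    | zero => intro s; simp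
    | succ m ih =>
      intro s
      rw [show s + (m + 1) = (s + m) + 1 by omega, Function.iterate_succ_apply,
        pred_eq hu (hGne _) (hGedge (s + m)), ih s]
  have hG0 : G 0 ≠ r := hGne 0
  obtain ⟨q, f, hw, hq, h0, hfq⟩ := hreach (G 0) hG0
  obtain ⟨ha, _, _⟩ := walk_char hr hu hw h0 hq
  have hGq : G (q * c) = G 0 := by
    rw [hG]
    simp [Nat.mul_mod_left]
  have := hGpred q (q * c - q)
  rw [show q * c - q + q = q * c by
    have : q ≤ q * c := Nat.le_mul_of_pos_right q hc
    omega, hGq] at this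
  rw [hfq] at ha
  rw [ha] at this
  exact hGne (q * c - q) this.symm

lemma sum_eq_card_forces_one {s : Finset (Fin N)} {f : Fin N → ℕ}
    (h1 : ∀ x ∈ s, 1 ≤ f x) (h2 : ∑ x ∈ s, f x = s.card) :
    ∀ x ∈ s, f x = 1 := by
  intro x hx
  by_contra h
  have hge : 2 ≤ f x := by
    have := h1 x hx
    omega
  have : ∑ y ∈ s, f y = f x + ∑ y ∈ s.erase x, f y := (Finset.add_sum_erase s f hx).symm
  have hrest : (s.erase x).card ≤ ∑ y ∈ s.erase x, f y := by
    calc (s.erase x).card = ∑ y ∈ s.erase x, 1 := by simp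
    _ ≤ ∑ y ∈ s.erase x, f y :=
      Finset.sum_le_sum fun y hy => h1 y (Finset.mem_of_mem_erase hy)
  have hcard : 1 ≤ s.card := Finset.card_pos.mpr ⟨x, hx⟩
  rw [Finset.card_erase_of_mem hx] at hrest
  omega

lemma sum01_eq_one_unique {f : Fin N → ℕ} (h01 : ∀ i, f i = 0 ∨ f i = 1)
    (h : ∑ i, f i = 1) : ∃! i, f i = 1 := by
  obtain ⟨i, _, hi⟩ := Finset.exists_ne_zero_of_sum_ne_zero (by rw [h]; exact one_ne_zero)
  have hi1 : f i = 1 := (h01 i).resolve_left hi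
  refine ⟨i, hi1, fun j hj => ?_⟩
  by_contra hne
  have hp : ∑ x ∈ ({j, i} : Finset (Fin N)), f x = 2 := by
    rw [Finset.sum_pair hne, hj, hi1]
  have hle : ∑ x ∈ ({j, i} : Finset (Fin N)), f x ≤ ∑ x, f x :=
    Finset.sum_le_sum_of_subset (Finset.subset_univ _)
  omega

end Main

end SpanArbAux

open SpanArbAux

/-- **Continuous constraint representation of spanning out-arborescences.**
For a `{0,1}` adjacency matrix `A` on `N ≥ 1` vertices and a root `r`, the following
are equivalent: (1) the total number of edges is `N − 1` and for every vertex `n ≠ r`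
the sum over `q = 1, …, N−1` of the `(r,n)` entries of `A ^ q` equals `1`; and (2) `A`
is a spanning out-arborescence rooted at `r`: `r` has in-degree `0`, every `n ≠ r` has
in-degree exactly `1`, every vertex is reachable from `r` by a directed walk, there is
no directed cycle, and for every `n ≠ r` there is exactly one directed walk of positive
length from `r` to `n`. -/
theorem spanning_arborescence_CCR_characterization
    {N : ℕ} (hN : 1 ≤ N) (A : Matrix (Fin N) (Fin N) ℕ)
    (hA : ∀ i j, A i j = 0 ∨ A i j = 1) (r : Fin N) :
    ((∑ i, ∑ j, A i j = N - 1) ∧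
        ∀ n : Fin N, n ≠ r → ∑ q ∈ Finset.Icc 1 (N - 1), (A ^ q) r n = 1) ↔
      ((∑ i, A i r = 0) ∧
        (∀ n : Fin N, n ≠ r → ∑ i, A i n = 1) ∧
        (∀ n : Fin N, ∃ (q : ℕ) (v : Fin (q + 1) → Fin N),
          v 0 = r ∧ v (Fin.last q) = n ∧ IsDirWalk A q v) ∧
        (¬ ∃ (q : ℕ) (v : Fin (q + 1) → Fin N),
          0 < q ∧ v 0 = v (Fin.last q) ∧ IsDirWalk A q v) ∧
        (∀ n : Fin N, n ≠ r →
          ∃! qv : Σ q : ℕ, Fin (q + 1) → Fin N,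
            0 < qv.1 ∧ qv.2 0 = r ∧ qv.2 (Fin.last qv.1) = n ∧
              IsDirWalk A qv.1 qv.2)) := by
  constructor
  · rintro ⟨h1, h2⟩
    -- existence of walks
    have hwalkEx : ∀ n : Fin N, n ≠ r →
        ∃ q, 1 ≤ q ∧ q ≤ N - 1 ∧ (walkSet A q r n).Nonempty := by
      intro n hn
      have hsum := h2 n hn
      obtain ⟨q, hq, hne⟩ :=
        Finset.exists_ne_zero_of_sum_ne_zero (hsum ▸ (one_ne_zero : (1 : ℕ) ≠ 0))
      rw [Finset.mem_Icc] at hq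
      rw [pow_eq_walkSet_card A hA] at hne
      exact ⟨q, hq.1, hq.2, Finset.card_pos.mp (Nat.pos_of_ne_zero hne)⟩
    -- in-degree at least one
    have hindeg1 : ∀ n : Fin N, n ≠ r → 1 ≤ ∑ i, A i n := by
      intro n hn
      obtain ⟨q, hq1, _, v, hv⟩ := hwalkEx n hn
      rw [mem_walkSet] at hv
      obtain ⟨hv0, hvl, hw⟩ := hv
      obtain ⟨q', rfl⟩ : ∃ q', q = q' + 1 := ⟨q - 1, by omega⟩
      have hedge := hw (Fin.last q')
      rw [Fin.succ_last, hvl] at hedge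
      have hle : A (v (Fin.last q').castSucc) n ≤ ∑ i, A i n :=
        Finset.single_le_sum (f := fun i => A i n) (fun i _ => Nat.zero_le _)
          (Finset.mem_univ (v (Fin.last q').castSucc))
      omega
    -- in-degree bookkeeping
    have htot : ∑ j, ∑ i, A i j = N - 1 := by rw [Finset.sum_comm]; exact h1
    have hcard : (Finset.univ.erase r).card = N - 1 := by
      rw [Finset.card_erase_of_mem (Finset.mem_univ r), Finset.card_univ,
        Fintype.card_fin]
    have hsplit : (∑ i, A i r) + ∑ j ∈ Finset.univ.erase r, ∑ i, A i j = N - 1 := by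
      rw [Finset.add_sum_erase _ (fun j => ∑ i, A i j) (Finset.mem_univ r)]
      exact htot
    have hge : N - 1 ≤ ∑ j ∈ Finset.univ.erase r, ∑ i, A i j := by
      have e1 : ∑ j ∈ Finset.univ.erase r, 1 = N - 1 := by
        rw [Finset.sum_const, hcard, smul_eq_mul, mul_one]
      have e2 : ∑ j ∈ Finset.univ.erase r, 1 ≤
          ∑ j ∈ Finset.univ.erase r, ∑ i, A i j :=
        Finset.sum_le_sum fun j hj => hindeg1 j (Finset.ne_of_mem_erase hj)
      omega
    have hr0 : ∑ i, A i r = 0 := by omega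
    have hsum_erase : ∑ j ∈ Finset.univ.erase r, ∑ i, A i j =
        (Finset.univ.erase r).card := by omega
    have hindeg : ∀ n : Fin N, n ≠ r → ∑ i, A i n = 1 := by
      intro n hn
      exact sum_eq_card_forces_one
        (fun x hx => hindeg1 x (Finset.ne_of_mem_erase hx)) hsum_erase n
        (Finset.mem_erase.mpr ⟨hn, Finset.mem_univ n⟩)
    have hr' : ∀ i, A i r = 0 := by
      rw [Finset.sum_eq_zero_iff] at hr0
      exact fun i => hr0 i (Finset.mem_univ i)
    have hu : ∀ n : Fin N, n ≠ r → ∃! i, A i n = 1 := fun n hn =>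
      sum01_eq_one_unique (fun i => hA i n) (hindeg n hn)
    have hnreach : ∀ n : Fin N, n ≠ r →
        ∃ q f, NWalk A q f ∧ 1 ≤ q ∧ f 0 = r ∧ f q = n := by
      intro n hn
      obtain ⟨q, hq1, _, v, hv⟩ := hwalkEx n hn
      rw [mem_walkSet] at hv
      exact ⟨q, toN v, toN_nwalk hv.2.2, hq1, by rw [toN_zero, hv.1],
        by rw [toN_last, hv.2.1]⟩
    refine ⟨hr0, hindeg, ?_, ?_, ?_⟩
    · -- reachability
      intro n
      by_cases hn : n = r
      · exact ⟨0, fun _ => r, rfl, hn ▸ rfl, fun t => t.elim0⟩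
      · obtain ⟨q, _, _, v, hv⟩ := hwalkEx n hn
        rw [mem_walkSet] at hv
        exact ⟨q, v, hv.1, hv.2.1, hv.2.2⟩
    · -- no cycles
      rintro ⟨q, v, hq, hvc, hw⟩
      exact no_cycle hr' hu hnreach hq (toN_nwalk hw)
        (by rw [toN_zero, toN_last, hvc])
    · -- unique walk
      intro n hn
      obtain ⟨q0, hq1, hqN, v0, hv0⟩ := hwalkEx n hn
      rw [mem_walkSet] at hv0
      obtain ⟨h00, h0l, h0w⟩ := hv0
      refine ⟨⟨q0, v0⟩, ⟨hq1, h00, h0l, h0w⟩, ?_⟩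
      rintro ⟨q, v⟩ ⟨hq, hv0', hvl', hw'⟩
      replace hq : 0 < q := hq
      replace hv0' : v 0 = r := hv0'
      replace hvl' : v (Fin.last q) = n := hvl'
      replace hw' : IsDirWalk A q v := hw'
      have hend : toN v q = toN v0 q0 := by
        rw [toN_last, toN_last, hvl', h0l]
      obtain ⟨hqq, hft⟩ := walk_len_unique hr' hu (toN_nwalk hw') (toN_nwalk h0w)
        (by rw [toN_zero, hv0']) (by rw [toN_zero, h00]) hq hq1 hend
      subst hqq
      have hveq : v = v0 := by
        funext t
        have ht : (t : ℕ) ≤ q := Nat.lt_succ_iff.mp t.isLt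
        have hvt := hft t.val ht
        rw [toN_eq v ht, toN_eq v0 ht] at hvt
        have e1 : (⟨t.val, Nat.lt_succ_of_le ht⟩ : Fin (q + 1)) = t := Fin.ext rfl
        rwa [e1] at hvt
      rw [hveq]
  · rintro ⟨hb0, hb1, _, hb3, hb4⟩
    constructor
    · -- edge count
      rw [show (∑ i, ∑ j, A i j) = ∑ j, ∑ i, A i j from Finset.sum_comm,
        ← Finset.add_sum_erase _ _ (Finset.mem_univ r), hb0,
        zero_add, Finset.sum_congr rfl
          (fun j hj => hb1 j (Finset.ne_of_mem_erase hj)),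
        Finset.sum_const, Finset.card_erase_of_mem (Finset.mem_univ r),
        Finset.card_univ, Fintype.card_fin, smul_eq_mul, mul_one]
    · intro n hn
      obtain ⟨⟨q0, v0⟩, ⟨hq0, h00, h0l, h0w⟩, huniq⟩ := hb4 n hn
      replace hq0 : 0 < q0 := hq0
      replace h00 : v0 0 = r := h00
      replace h0l : v0 (Fin.last q0) = n := h0l
      replace h0w : IsDirWalk A q0 v0 := h0w
      have hq0N : q0 ≤ N - 1 := by
        by_contra hgt
        have hcard : Fintype.card (Fin N) < Fintype.card (Fin (q0 + 1)) := by
          simp only [Fintype.card_fin]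
          omega
        obtain ⟨x, y, hxy, hvxy⟩ := Fintype.exists_ne_map_eq_of_card_lt v0 hcard
        obtain ⟨a, b, hab, heqab⟩ :
            ∃ a b : Fin (q0 + 1), a < b ∧ v0 a = v0 b := by
          rcases lt_or_gt_of_ne hxy with h | h
          · exact ⟨x, y, h, hvxy⟩
          · exact ⟨y, x, h, hvxy.symm⟩
        have hfw : NWalk A q0 (toN v0) := toN_nwalk h0w
        have hbq : (b : ℕ) ≤ q0 := Nat.lt_succ_iff.mp b.isLt
        have habn : (a : ℕ) < (b : ℕ) := hab
        set c : ℕ := b.val - a.val with hc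
        set g : ℕ → Fin N := fun u => toN v0 (a.val + u) with hgdef
        have hgw : NWalk A c g := by
          intro u hu
          have h := hfw (a.val + u) (by omega)
          show A (toN v0 (a.val + u)) (toN v0 (a.val + (u + 1))) = 1
          rwa [show a.val + (u + 1) = (a.val + u) + 1 by omega]
        have hg0c : g 0 = g c := by
          rw [hgdef]
          simp only []
          rw [Nat.add_zero, show a.val + c = b.val by omega,
            toN_eq v0 (Nat.lt_succ_iff.mp a.isLt), toN_eq v0 hbq]
          have ea : (⟨a.val, a.isLt⟩ : Fin (q0 + 1)) = a := Fin.ext rfl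
          have eb : (⟨b.val, b.isLt⟩ : Fin (q0 + 1)) = b := Fin.ext rfl
          rw [show (⟨a.val, Nat.lt_succ_of_le (Nat.lt_succ_iff.mp a.isLt)⟩ :
            Fin (q0 + 1)) = a from Fin.ext rfl,
            show (⟨b.val, Nat.lt_succ_of_le hbq⟩ : Fin (q0 + 1)) = b from
              Fin.ext rfl, heqab]
        refine hb3 ⟨c, ofN g, by omega, ?_, ofN_dirWalk hgw⟩
        show g 0 = g c
        exact hg0c
      have hterm : ∀ q ∈ Finset.Icc 1 (N - 1),
          (A ^ q) r n = if q = q0 then 1 else 0 := by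
        intro q hq
        rw [Finset.mem_Icc] at hq
        rw [pow_eq_walkSet_card A hA]
        by_cases hqe : q = q0
        · subst hqe
          rw [if_pos rfl, Finset.card_eq_one]
          refine ⟨v0, ?_⟩
          ext v
          rw [mem_walkSet, Finset.mem_singleton]
          constructor
          · rintro ⟨hv1, hv2, hv3⟩
            have hs := huniq ⟨q, v⟩ ⟨show 0 < q by omega, hv1, hv2, hv3⟩
            obtain ⟨-, hheq⟩ := Sigma.mk.inj_iff.mp hs
            exact eq_of_heq hheq
          · rintro rfl
            exact ⟨h00, h0l, h0w⟩
        · rw [if_neg hqe, Finset.card_eq_zero, Finset.eq_empty_iff_forall_notMem]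
          intro v hv
          rw [mem_walkSet] at hv
          have hs := huniq ⟨q, v⟩ ⟨show 0 < q by omega, hv.1, hv.2.1, hv.2.2⟩
          exact hqe (congrArg Sigma.fst hs)
      rw [Finset.sum_congr rfl hterm, Finset.sum_ite_eq' (Finset.Icc 1 (N - 1))
        q0 (fun _ => 1), if_pos (Finset.mem_Icc.mpr ⟨hq0, hq0N⟩)]
end
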